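/- Pretrained conformal coverage lower bound: let Z ∈ Z^{n+1} be a time series, s : Z^{L+1} → ℝ a fixed score function with memory L (0 ≤ L ≤ n), and define S_i = s(Z_i; Z_{i-1},...,Z_{i-L}) for i = L+1,...,n+1 and S = (S_{L+1},...,S_{n+1}). Then P(S_{n+1} ≤ Quantile_{(1-α)(1+1/(n-L))}(S_{L+1},...,S_n)) ≥ 1 − α − min_{τ ∈ {0,...,n-L}} { τ/(n-L+1) + Ψ̄_τ(S) }. -/

import Mathlib

open MeasureTheory
open scoped ENNReal

/-- The `j`-th order statistic (1-indexed) of a finite real vector. -/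
noncomputable def orderStat {m : ℕ} (v : Fin m → ℝ) (j : ℕ) : ℝ :=
  ((List.ofFn v).mergeSort (fun x y => x ≤ y)).getD (j - 1) 0

/-- `Quantile b v` is the `⌈b·m⌉`-th order statistic of `v ∈ ℝ^m`, with the conventions
`Quantile b v = ⊤` if `b > 1` and `Quantile b v = ⊥` if `b ≤ 0`. -/
noncomputable def Quantile {m : ℕ} (b : ℝ) (v : Fin m → ℝ) : EReal :=
  if b > 1 then ⊤ else if b ≤ 0 then ⊥ else ((orderStat v ⌈b * m⌉.toNat : ℝ) : EReal)

/-- The deletion operator `Δ⁰_{k,τ}` of the paper (with `k` and `τ` counts of entries). -/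
def delta0 {α : Type*} (m k τ : ℕ) (w : Fin m → α) : Fin (m - τ) → α :=
  fun i =>
    if i.val < m - τ - k then w ⟨i.val, by have := i.isLt; omega⟩
    else w ⟨i.val + τ, by have := i.isLt; omega⟩

/-- The deletion operator `Δ¹_{k,τ}` of the paper. -/
def delta1 {α : Type*} (m k τ : ℕ) (w : Fin m → α) : Fin (m - τ) → α :=
  fun i =>
    if h : k + τ < m then
      if h2 : i.val < m - τ - k then w ⟨i.val + k + τ, by have := i.isLt; omega⟩
      else w ⟨i.val - (m - τ - k), by have := i.isLt; omega⟩
    else w ⟨(i.val + k + τ - m) % m, Nat.mod_lt _ (by have := i.isLt; omega)⟩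

/-- Total variation distance between the laws of two random elements `U, V` under `P`. -/
noncomputable def dTV {Ω γ : Type*} [MeasurableSpace Ω] [MeasurableSpace γ]
    (P : Measure Ω) (U V : Ω → γ) : ℝ :=
  ⨆ E : {E : Set γ // MeasurableSet E}, |(P (U ⁻¹' E.1)).toReal - (P (V ⁻¹' E.1)).toReal|

/-- The switch coefficient `Ψ_{k,τ}(W)` of a random vector `W` of length `m`. -/
noncomputable def switchCoef {Ω α : Type*} [MeasurableSpace Ω] [MeasurableSpace α]
    (P : Measure Ω) {m : ℕ} (W : Ω → Fin m → α) (k τ : ℕ) : ℝ :=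
  dTV P (fun ω => delta0 m k τ (W ω)) (fun ω => delta1 m k τ (W ω))

/-- The averaged switch coefficient `Ψ̄_τ(W) = (1/m) ∑_{k=1}^m Ψ_{k,τ}(W)`. -/
noncomputable def avgSwitchCoef {Ω α : Type*} [MeasurableSpace Ω] [MeasurableSpace α]
    (P : Measure Ω) {m : ℕ} (W : Ω → Fin m → α) (τ : ℕ) : ℝ :=
  (∑ k ∈ Finset.Icc 1 m, switchCoef P W k τ) / m

/-- Stationarity of a time series `Z = (Z_1,…,Z_{n+1})`. -/
def Stationary {Ω α : Type*} [MeasurableSpace Ω] [MeasurableSpace α]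
    (P : Measure Ω) {n : ℕ} (Z : Ω → Fin (n + 1) → α) : Prop :=
  ∀ (ℓ i : ℕ) (h : i + ℓ ≤ n + 1),
    Measure.map (fun ω (j : Fin ℓ) => Z ω ⟨i + j.val, by have := j.isLt; omega⟩) P =
      Measure.map (fun ω (j : Fin ℓ) => Z ω ⟨j.val, by have := j.isLt; omega⟩) P

/-- Exchangeability of a random vector. -/
def Exchangeable {Ω α : Type*} [MeasurableSpace Ω] [MeasurableSpace α]
    (P : Measure Ω) {n : ℕ} (Z : Ω → Fin (n + 1) → α) : Prop :=
  ∀ σ : Equiv.Perm (Fin (n + 1)),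
    Measure.map (fun ω => Z ω ∘ σ) P = Measure.map Z P

/-- The β-mixing coefficient with lag `τ` of `Z`, defined via an independent copy `Z'`. -/
noncomputable def betaMix {Ω α : Type*} [MeasurableSpace Ω] [MeasurableSpace α]
    (P : Measure Ω) (n : ℕ) (Z Z' : Ω → Fin (n + 1) → α) (τ : ℕ) : ℝ :=
  ⨆ k : Fin (n - τ),
    dTV P
      (fun ω (i : Fin (n + 1 - τ)) =>
        if i.val < k.val + 1 then Z ω ⟨i.val, by have := i.isLt; omega⟩
        else Z ω ⟨i.val + τ, by have := i.isLt; omega⟩)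
      (fun ω (i : Fin (n + 1 - τ)) =>
        if i.val < k.val + 1 then Z ω ⟨i.val, by have := i.isLt; omega⟩
        else Z' ω ⟨i.val + τ, by have := i.isLt; omega⟩)

/-!
Let `R` be the number of scores `S_j` strictly below the test score `S_{n+1}`, among all
`m = n - L + 1` scores; coverage holds as soon as `R < r := ⌈b (n - L)⌉`, where
`b = (1 - a)(1 + 1/(n - L))` is the quantile level, so that `r ≥ (1 - a) m`. The deletion
`Δ⁰_{k,τ}` keeps the last entry and removes `τ` others, so it lowers `R` by at most `τ`, while
`Δ¹_{k,τ}` moves the `k`-th entry to the last place and can only lower its rank. Replacing the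
law of `Δ⁰_{k,τ}(S)` by that of `Δ¹_{k,τ}(S)` costs `Ψ_{k,τ}`, and at most `m + τ - r` entries
can have rank `≥ r - τ`; summing over `k` gives `m · P(R ≥ r) ≤ m + τ - r + ∑_k Ψ_{k,τ}`.
-/

open Finset

section Rank

variable {α : Type*} [LinearOrder α]

def countLT {m : ℕ} (w : Fin m → α) (x : α) : ℕ := #{j | w j < x}

lemma countLT_comp_le {M m : ℕ} (w : Fin m → α) {φ : Fin M → Fin m}
    (hφ : Function.Injective φ) (x : α) : countLT (w ∘ φ) x ≤ countLT w x :=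
  card_le_card_of_injOn φ (fun i hi => by simpa using hi) hφ.injOn

lemma countLT_le_comp_add {M m : ℕ} (w : Fin m → α) {φ : Fin M → Fin m}
    (hφ : Function.Injective φ) (x : α) : countLT w x ≤ countLT (w ∘ φ) x + (m - M) := by
  classical
  have hsub : ({j | w j < x} : Finset (Fin m)) ⊆
      ({i | w (φ i) < x} : Finset (Fin M)).image φ ∪ (univ \ univ.image φ) := by
    intro j hj
    by_cases hjφ : j ∈ univ.image φ
    · obtain ⟨i, -, rfl⟩ := mem_image.mp hjφ
      exact mem_union_left _ (mem_image_of_mem φ (by simpa using hj))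
    · exact mem_union_right _ (mem_sdiff.mpr ⟨mem_univ j, hjφ⟩)
  calc countLT w x ≤ #(({i | w (φ i) < x} : Finset (Fin M)).image φ ∪ (univ \ univ.image φ)) :=
      card_le_card hsub
    _ ≤ countLT (w ∘ φ) x + (m - M) := by
        refine (card_union_le _ _).trans (add_le_add card_image_le (le_of_eq ?_))
        rw [card_univ_sdiff, card_image_of_injective _ hφ, card_univ, Fintype.card_fin,
          Fintype.card_fin]

lemma card_le_countLT_add_le {m : ℕ} (w : Fin m → α) {t : ℕ} (ht : t ≤ m) :
    #{j | t ≤ countLT w (w j)} + t ≤ m := by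
  classical
  set A : Finset (Fin m) := {j | t ≤ countLT w (w j)}
  rcases A.eq_empty_or_nonempty with hA | hA
  · simpa [hA] using ht
  obtain ⟨j₀, hj₀, hmin⟩ := exists_min_image A w hA
  have hdisj : Disjoint A ({j | w j < w j₀} : Finset (Fin m)) :=
    disjoint_left.mpr fun j hj hlt => (hmin j hj).not_gt (mem_filter.mp hlt).2
  calc #A + t ≤ #A + countLT w (w j₀) := Nat.add_le_add_left (mem_filter.mp hj₀).2 _
    _ = #(A ∪ ({j | w j < w j₀} : Finset (Fin m))) := (card_union_of_disjoint hdisj).symm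
    _ ≤ m := (card_le_univ _).trans (Fintype.card_fin m).le

end Rank

section Deletion

def delta0Index (m k τ : ℕ) (i : Fin (m - τ)) : Fin m :=
  have := i.isLt
  if i.val < m - τ - k then ⟨i.val, by omega⟩ else ⟨i.val + τ, by omega⟩

def delta1Index (m k τ : ℕ) (i : Fin (m - τ)) : Fin m :=
  have := i.isLt
  if h : k + τ < m then
    if h' : i.val < m - τ - k then ⟨i.val + k + τ, by omega⟩
    else ⟨i.val - (m - τ - k), by omega⟩
  else ⟨(i.val + k + τ - m) % m, Nat.mod_lt _ (by omega)⟩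

variable {α : Type*} {m k τ : ℕ}

lemma delta0_eq_comp (w : Fin m → α) : delta0 m k τ w = w ∘ delta0Index m k τ := by
  funext i; simp only [delta0, delta0Index, Function.comp_apply]; split_ifs <;> rfl

lemma delta1_eq_comp (w : Fin m → α) : delta1 m k τ w = w ∘ delta1Index m k τ := by
  funext i; simp only [delta1, delta1Index, Function.comp_apply]; split_ifs <;> rfl

lemma delta0Index_injective : Function.Injective (delta0Index m k τ) := by
  intro i j h
  unfold delta0Index at h
  apply Fin.ext
  split_ifs at h <;> simp only [Fin.mk.injEq] at h <;> omega

/-- For `k ≤ m` the modular branch of `delta1Index` is the same cyclic shift by `k + τ`. -/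
lemma delta1Index_val (hkm : k ≤ m) (hτ : τ < m) (i : Fin (m - τ)) :
    (delta1Index m k τ i).val =
      if i.val < m - τ - k then i.val + k + τ else i.val + k + τ - m := by
  have := i.isLt
  unfold delta1Index
  split_ifs <;> simp only [Nat.mod_eq_of_lt (show i.val + k + τ - m < m by omega)] <;> omega

lemma delta1Index_injective (hkm : k ≤ m) (hτ : τ < m) :
    Function.Injective (delta1Index m k τ) := by
  intro i j h
  have hv := congrArg Fin.val h
  rw [delta1Index_val hkm hτ, delta1Index_val hkm hτ] at hv
  apply Fin.ext
  split_ifs at hv <;> omega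

lemma delta0Index_last (hk : 1 ≤ k) (hτ : τ < m) :
    delta0Index m k τ ⟨m - τ - 1, by omega⟩ = ⟨m - 1, by omega⟩ := by
  unfold delta0Index
  split_ifs with h <;> simp only [Fin.mk.injEq] at h ⊢ <;> omega

lemma delta1Index_last (hk : 1 ≤ k) (hkm : k ≤ m) (hτ : τ < m) :
    delta1Index m k τ ⟨m - τ - 1, by omega⟩ = ⟨k - 1, by omega⟩ := by
  ext
  rw [delta1Index_val hkm hτ]
  simp only
  split_ifs <;> omega

end Deletion

section DeletionRank

variable {α : Type*} [LinearOrder α] {m k τ : ℕ}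

lemma countLT_le_countLT_delta0_add (w : Fin m → α) (hk : 1 ≤ k) (hτ : τ < m) :
    countLT w (w ⟨m - 1, by omega⟩) ≤
      countLT (delta0 m k τ w) (delta0 m k τ w ⟨m - τ - 1, by omega⟩) + τ := by
  rw [delta0_eq_comp, Function.comp_apply, delta0Index_last hk hτ]
  have h := countLT_le_comp_add w (delta0Index_injective (k := k) (τ := τ))
    (w ⟨m - 1, by omega⟩)
  rwa [Nat.sub_sub_self hτ.le] at h

lemma countLT_delta1_le (w : Fin m → α) (hk : 1 ≤ k) (hkm : k ≤ m) (hτ : τ < m) :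
    countLT (delta1 m k τ w) (delta1 m k τ w ⟨m - τ - 1, by omega⟩) ≤
      countLT w (w ⟨k - 1, by omega⟩) := by
  rw [delta1_eq_comp, Function.comp_apply, delta1Index_last hk hkm hτ]
  exact countLT_comp_le w (delta1Index_injective hkm hτ) _

lemma card_filter_countLT_delta1_add_le (w : Fin m → α) (hτ : τ < m) {t : ℕ} (ht : t ≤ m) :
    #{k ∈ Icc 1 m |
      t ≤ countLT (delta1 m k τ w) (delta1 m k τ w ⟨m - τ - 1, by omega⟩)} + t ≤ m := by
  refine le_trans (Nat.add_le_add_right ?_ t) (card_le_countLT_add_le w ht)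
  refine card_le_card_of_injOn (fun k => ⟨(k - 1) % m, Nat.mod_lt _ (by omega)⟩) ?_ ?_
  · intro k hk
    simp only [mem_coe, mem_filter, mem_Icc] at hk
    simp only [mem_coe, mem_filter, mem_univ, true_and, Nat.mod_eq_of_lt (by omega : k - 1 < m)]
    exact hk.2.trans (countLT_delta1_le w hk.1.1 hk.1.2 hτ)
  · intro k₁ hk₁ k₂ hk₂ h
    simp only [mem_coe, mem_filter, mem_Icc] at hk₁ hk₂
    simp only [Fin.mk.injEq, Nat.mod_eq_of_lt (by omega : k₁ - 1 < m),
      Nat.mod_eq_of_lt (by omega : k₂ - 1 < m)] at h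
    omega

end DeletionRank

section Probability

variable {Ω : Type*} [MeasurableSpace Ω]

lemma dTV_nonneg {γ : Type*} [MeasurableSpace γ] (P : Measure Ω) (U V : Ω → γ) :
    0 ≤ dTV P U V :=
  Real.iSup_nonneg fun _ => abs_nonneg _

lemma toReal_measure_preimage_le_add_dTV {γ : Type*} [MeasurableSpace γ] (P : Measure Ω)
    [IsProbabilityMeasure P] (U V : Ω → γ) {E : Set γ} (hE : MeasurableSet E) :
    (P (U ⁻¹' E)).toReal ≤ (P (V ⁻¹' E)).toReal + dTV P U V := by
  have hbdd : BddAbove (Set.range fun F : {F : Set γ // MeasurableSet F} =>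
      |(P (U ⁻¹' F.1)).toReal - (P (V ⁻¹' F.1)).toReal|) :=
    ⟨1, Set.forall_mem_range.mpr fun _ => abs_sub_le_of_nonneg_of_le ENNReal.toReal_nonneg
      measureReal_le_one ENNReal.toReal_nonneg measureReal_le_one⟩
  have := (le_abs_self _).trans (le_ciSup hbdd ⟨E, hE⟩)
  unfold dTV
  linarith

lemma sum_measure_le_mul_measure_univ {ι : Type*} (μ : Measure Ω) (s : Finset ι)
    {F : ι → Set Ω} [∀ ω, DecidablePred fun k => ω ∈ F k]
    (hF : ∀ k ∈ s, MeasurableSet (F k)) {C : ℕ} (hC : ∀ ω, #{k ∈ s | ω ∈ F k} ≤ C) :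
    ∑ k ∈ s, μ (F k) ≤ C * μ Set.univ := by
  calc ∑ k ∈ s, μ (F k) = ∫⁻ ω, ∑ k ∈ s, (F k).indicator 1 ω ∂μ := by
        rw [lintegral_finsetSum s fun k hk => measurable_one.indicator (hF k hk)]
        exact sum_congr rfl fun k hk => (lintegral_indicator_one (hF k hk)).symm
    _ = ∫⁻ ω, (#{k ∈ s | ω ∈ F k} : ℝ≥0∞) ∂μ := by
        simp only [Set.indicator_apply, Pi.one_apply, sum_boole]
    _ ≤ ∫⁻ _, (C : ℝ≥0∞) ∂μ := lintegral_mono fun ω => Nat.cast_le.mpr (hC ω)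
    _ = C * μ Set.univ := lintegral_const _

lemma measurable_countLT {m : ℕ} (i : Fin m) :
    Measurable fun w : Fin m → ℝ => countLT w (w i) := by
  simp only [countLT, card_filter]
  exact Finset.measurable_sum _ fun j _ => Measurable.ite
    (measurableSet_lt (measurable_pi_apply j) (measurable_pi_apply i))
    measurable_const measurable_const

end Probability

section SwitchBound

variable {Ω : Type*} [MeasurableSpace Ω] (P : Measure Ω) [IsProbabilityMeasure P] {m : ℕ}
  {S : Ω → Fin m → ℝ}

lemma measurable_delta1_comp (hS : Measurable S) (k τ : ℕ) :
    Measurable (delta1 m k τ ∘ S) := by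
  rw [show delta1 m k τ = fun w => w ∘ delta1Index m k τ from funext delta1_eq_comp]
  exact (measurable_pi_lambda _ fun _ => measurable_pi_apply _).comp hS

lemma mul_toReal_measure_le_countLT_le (hS : Measurable S) {r τ : ℕ} (hr : r ≤ m + τ)
    (hτ : τ < m) :
    m * (P {ω | r ≤ countLT (S ω) (S ω ⟨m - 1, by omega⟩)}).toReal ≤
      m + τ - r + ∑ k ∈ Icc 1 m, switchCoef P S k τ := by
  classical
  set F := {ω | r ≤ countLT (S ω) (S ω ⟨m - 1, by omega⟩)}
  set E : Set (Fin (m - τ) → ℝ) := {w | r - τ ≤ countLT w (w ⟨m - τ - 1, by omega⟩)}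
  have hE : MeasurableSet E := measurableSet_le measurable_const (measurable_countLT _)
  have hF_le : ∀ k ∈ Icc 1 m, (P F).toReal ≤ (P ((delta0 m k τ ∘ S) ⁻¹' E)).toReal :=
    fun k hk => ENNReal.toReal_mono (measure_ne_top _ _) <| measure_mono fun ω hω =>
      Nat.sub_le_of_le_add (le_trans hω (countLT_le_countLT_delta0_add _ (mem_Icc.mp hk).1 hτ))
  have hdelta1 : ∑ k ∈ Icc 1 m, (P ((delta1 m k τ ∘ S) ⁻¹' E)).toReal ≤ m + τ - r := by
    have hsum := sum_measure_le_mul_measure_univ P (Icc 1 m) (C := m + τ - r)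
      (fun k _ => measurable_delta1_comp hS k τ hE) fun ω => by
        have := card_filter_countLT_delta1_add_le (S ω) hτ (t := r - τ) (by omega)
        calc _ ≤ m - (r - τ) := by convert Nat.le_sub_of_add_le this using 3; rfl
          _ ≤ m + τ - r := by omega
    rw [measure_univ, mul_one] at hsum
    have := ENNReal.toReal_mono (ENNReal.natCast_ne_top _) hsum
    rwa [ENNReal.toReal_sum fun _ _ => measure_ne_top _ _, ENNReal.toReal_natCast,
      Nat.cast_sub hr, Nat.cast_add] at this
  calc m * (P F).toReal = ∑ _k ∈ Icc 1 m, (P F).toReal := by simp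
    _ ≤ ∑ k ∈ Icc 1 m, ((P ((delta1 m k τ ∘ S) ⁻¹' E)).toReal + switchCoef P S k τ) :=
        sum_le_sum fun k hk =>
          (hF_le k hk).trans (toReal_measure_preimage_le_add_dTV P _ _ hE)
    _ ≤ m + τ - r + ∑ k ∈ Icc 1 m, switchCoef P S k τ := by
        rw [sum_add_distrib]
        exact add_le_add_left hdelta1 _

lemma sub_div_sub_avgSwitchCoef_le (hS : Measurable S) {r τ : ℕ} (hr : r ≤ m + τ)
    (hτ : τ < m) :
    ((r : ℝ) - τ) / m - avgSwitchCoef P S τ ≤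
      (P {ω | countLT (S ω) (S ω ⟨m - 1, by omega⟩) < r}).toReal := by
  have hF : MeasurableSet {ω | r ≤ countLT (S ω) (S ω ⟨m - 1, by omega⟩)} :=
    measurableSet_le measurable_const ((measurable_countLT _).comp hS)
  have hcompl : {ω | countLT (S ω) (S ω ⟨m - 1, by omega⟩) < r} =
      {ω | r ≤ countLT (S ω) (S ω ⟨m - 1, by omega⟩)}ᶜ := by
    ext; simp
  have hm : (0 : ℝ) < m := by exact_mod_cast (by omega : 0 < m)
  have := mul_toReal_measure_le_countLT_le P hS hr hτ
  rw [hcompl, prob_compl_eq_one_sub hF, ENNReal.toReal_sub_of_le prob_le_one ENNReal.one_ne_top,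
    ENNReal.toReal_one, avgSwitchCoef, ← sub_div, div_le_iff₀ hm]
  linarith

end SwitchBound

section Quantile

lemma List.Pairwise.succ_le_countP_lt {α : Type*} [LinearOrder α] {l : List α}
    (hl : l.Pairwise (· ≤ ·)) {j : ℕ} (hj : j < l.length) {x : α} (hx : l[j] < x) :
    j + 1 ≤ l.countP (· < x) := by
  have htake : (l.take (j + 1)).countP (· < x) = j + 1 := by
    rw [List.countP_eq_length.mpr, List.length_take, min_eq_left hj]
    intro y hy
    obtain ⟨i, hi, rfl⟩ := List.mem_take_iff_getElem.mp hy
    rcases (show i ≤ j by omega).eq_or_lt with rfl | hij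
    · simpa using hx
    · simpa using (List.pairwise_iff_getElem.mp hl i j _ hj hij).trans_lt hx
  exact htake ▸ (List.take_sublist _ l).countP_le

lemma le_orderStat_of_countLT_lt {N : ℕ} (v : Fin N → ℝ) {x : ℝ} {j : ℕ} (hjN : j ≤ N)
    (h : countLT v x < j) : x ≤ orderStat v j := by
  set l := (List.ofFn v).mergeSort (fun x y => x ≤ y)
  have hlen : l.length = N := by simp [l]
  have hsorted : l.Pairwise (· ≤ ·) := by
    simpa using List.pairwise_mergeSort (le := fun x y : ℝ => decide (x ≤ y))
      (fun _ _ _ hab hbc => by simpa using le_trans (by simpa using hab) (by simpa using hbc))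
      (fun a b => by simpa using le_total a b) (List.ofFn v)
  have hcount : l.countP (· < x) = countLT v x := by
    rw [((List.ofFn v).mergeSort_perm _).countP_eq, List.ofFn_eq_map, List.countP_map,
      List.countP_eq_length_filter]
    rfl
  by_contra! hlt
  rw [orderStat, List.getD_eq_getElem l 0 (by omega)] at hlt
  have := hsorted.succ_le_countP_lt (by omega) hlt
  omega

lemma toNat_ceil_mul_le {b : ℝ} (hb1 : b ≤ 1) (N : ℕ) : ⌈b * N⌉.toNat ≤ N :=
  Int.toNat_le.mpr (Int.ceil_le.mpr (by push_cast; nlinarith [(N.cast_nonneg : (0 : ℝ) ≤ N)]))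

lemma le_quantile_of_countLT_lt {N : ℕ} (v : Fin N → ℝ) {b x : ℝ} (hb0 : 0 < b)
    (hb1 : b ≤ 1) (h : countLT v x < ⌈b * N⌉.toNat) : (x : EReal) ≤ Quantile b v := by
  rw [Quantile, if_neg (not_lt.mpr hb1), if_neg (not_le.mpr hb0)]
  exact_mod_cast le_orderStat_of_countLT_lt v (toNat_ceil_mul_le hb1 N) h

lemma le_quantile_castSucc_of_countLT_lt {N : ℕ} (w : Fin (N + 1) → ℝ) {b : ℝ} (hb0 : 0 < b)
    (hb1 : b ≤ 1) (h : countLT w (w (Fin.last N)) < ⌈b * N⌉.toNat) :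
    (w (Fin.last N) : EReal) ≤ Quantile b (w ∘ Fin.castSucc) :=
  le_quantile_of_countLT_lt _ hb0 hb1 <|
    (countLT_comp_le w (Fin.castSucc_injective N) _).trans_lt h

end Quantile

section Coverage

variable {Ω : Type*} [MeasurableSpace Ω] (P : Measure Ω) [IsProbabilityMeasure P]

theorem le_toReal_measure_le_quantile_castSucc {N : ℕ} {S : Ω → Fin (N + 1) → ℝ}
    (hS : Measurable S) (hN : 0 < N) {a : ℝ} (ha : 0 < a) (ha1 : a < 1) {τ : ℕ}
    (hτ : τ ≤ N) :
    1 - a - ((τ : ℝ) / (N + 1) + avgSwitchCoef P S τ) ≤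
      (P {ω | (S ω (Fin.last N) : EReal) ≤
        Quantile ((1 - a) * (1 + 1 / (N : ℝ))) (S ω ∘ Fin.castSucc)}).toReal := by
  set b := (1 - a) * (1 + 1 / (N : ℝ))
  have hNpos : (0 : ℝ) < N := Nat.cast_pos.mpr hN
  have hτN : (0 : ℝ) ≤ τ / (N + 1) := by positivity
  rcases lt_or_ge 1 b with hb1 | hb1
  · have havg : 0 ≤ avgSwitchCoef P S τ :=
      div_nonneg (sum_nonneg fun k _ => dTV_nonneg P _ _) (N + 1).cast_nonneg
    simp only [Quantile, if_pos hb1, le_top, Set.ofPred_true, measure_univ, ENNReal.toReal_one]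
    linarith
  set r := ⌈b * N⌉.toNat
  have hr : (1 - a) * (N + 1) ≤ r := by
    have hbN : b * N = (1 - a) * (N + 1) := by simp only [b]; field_simp
    exact hbN ▸ (Int.le_ceil _).trans (by exact_mod_cast Int.self_le_toNat _)
  have hcore := sub_div_sub_avgSwitchCoef_le P hS (r := r) (τ := τ)
    (by have := toNat_ceil_mul_le hb1 N; omega) (by omega)
  have hlast : (⟨N + 1 - 1, by omega⟩ : Fin (N + 1)) = Fin.last N := Fin.ext (by simp)
  rw [hlast, Nat.cast_add, Nat.cast_one] at hcore
  have hsub : {ω | countLT (S ω) (S ω (Fin.last N)) < r} ⊆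
      {ω | (S ω (Fin.last N) : EReal) ≤ Quantile b (S ω ∘ Fin.castSucc)} :=
    fun ω hω => le_quantile_castSucc_of_countLT_lt (S ω) (by positivity) hb1 hω
  have hrN : 1 - a ≤ r / ((N : ℝ) + 1) := (le_div_iff₀ (by positivity)).mpr hr
  calc 1 - a - ((τ : ℝ) / (N + 1) + avgSwitchCoef P S τ)
      ≤ (r - τ) / ((N : ℝ) + 1) - avgSwitchCoef P S τ := by rw [sub_div]; linarith
    _ ≤ _ := hcore
    _ ≤ _ := ENNReal.toReal_mono (measure_ne_top _ _) (measure_mono hsub)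

end Coverage

open Finset in
/-- Theorem 1: pretrained conformal coverage lower bound, in terms of the averaged switch
coefficients of the score process (stated for each `τ`, equivalent to the `min` over `τ`). -/
theorem stmt11 {Ω α : Type*} [MeasurableSpace Ω] [MeasurableSpace α]
    (P : Measure Ω) [IsProbabilityMeasure P] {n L : ℕ} (hL : L < n)
    (Z : Ω → Fin (n + 1) → α) (hZ : Measurable Z)
    (s : (Fin (L + 1) → α) → ℝ) (hs : Measurable s)
    (a : ℝ) (ha : 0 < a) (ha1 : a < 1) (τ : ℕ) (hτ : τ ≤ n - L) :
    (P {ω | (s (fun l : Fin (L + 1) => Z ω ⟨n - l.val, by omega⟩) : EReal)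
          ≤ Quantile ((1 - a) * (1 + 1 / ((n : ℝ) - L)))
              (fun j : Fin (n - L) =>
                s fun l : Fin (L + 1) =>
                  Z ω ⟨L + j.val - l.val, by have := j.isLt; omega⟩)}).toReal
      ≥ 1 - a - ((τ : ℝ) / ((n : ℝ) - L + 1)
          + avgSwitchCoef P (fun ω (j : Fin (n - L + 1)) =>
              s fun l : Fin (L + 1) =>
                Z ω ⟨L + j.val - l.val, by have := j.isLt; omega⟩) τ) := by
  set W : Ω → Fin (n - L + 1) → ℝ := fun ω j =>
    s fun l : Fin (L + 1) => Z ω ⟨L + j.val - l.val, by have := j.isLt; omega⟩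
  have hW : Measurable W := measurable_pi_lambda _ fun _ =>
    hs.comp (measurable_pi_lambda _ fun _ => (measurable_pi_apply _).comp hZ)
  have htest : ∀ ω,
      s (fun l : Fin (L + 1) => Z ω ⟨n - l.val, by omega⟩) = W ω (Fin.last _) := fun ω =>
    congrArg s (funext fun l => congrArg (Z ω) (Fin.ext (by simp; omega)))
  simp only [htest]
  rw [← Nat.cast_sub hL.le]
  exact le_toReal_measure_le_quantile_castSucc P hW (Nat.sub_pos_of_lt hL) ha ha1 hτ
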